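/- arXiv:2411.02952 — 4 statements merged into one kernel-verified Lean document; each statement's English description precedes it below -/
import Mathlib

section
/- Let ν, ν_h ∈ ℝ³ be unit vectors. Then for every g ∈ ℝ³, ‖((I − ν_h⊗ν_h)(I − ν⊗ν) − (I − ν⊗ν_h)) g‖ ≤ (3/2) ‖ν − ν_h‖² ‖g‖. -/
open scoped RealInnerProductSpace

/-- `(I − ν_h⊗ν_h)(I − ν⊗ν) g − (I − ν⊗ν_h) g`, written out in vector form. -/
theorem stmt_5 (ν νh : EuclideanSpace ℝ (Fin 3)) (hν : ‖ν‖ = 1) (hνh : ‖νh‖ = 1)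
    (g : EuclideanSpace ℝ (Fin 3)) :
    ‖((g - ⟪ν, g⟫ • ν) - ⟪νh, g - ⟪ν, g⟫ • ν⟫ • νh) - (g - ⟪νh, g⟫ • ν)‖
      ≤ (3 / 2) * ‖ν - νh‖ ^ 2 * ‖g‖ := by
  set a := ⟪ν, g⟫ with ha
  set b := ⟪νh, g⟫ with hb
  set c := ⟪νh, ν⟫ with hc
  have hinner : ⟪νh, g - a • ν⟫ = b - a * c := by
    rw [inner_sub_right, real_inner_smul_right]
  have hd : ‖ν - νh‖ ^ 2 = 2 * (1 - c) := by
    rw [norm_sub_sq_real, hν, hνh, real_inner_comm]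
    ring
  have hc1 : 1 - c ≥ 0 := by
    nlinarith [sq_nonneg ‖ν - νh‖, hd]
  have hE : ((g - a • ν) - ⟪νh, g - a • ν⟫ • νh) - (g - b • ν)
      = (b - a) • (ν - νh) - (a * (1 - c)) • νh := by
    rw [hinner]
    module
  rw [hE]
  have h1 : ‖(b - a) • (ν - νh) - (a * (1 - c)) • νh‖
      ≤ |b - a| * ‖ν - νh‖ + |a| * (1 - c) := by
    calc ‖(b - a) • (ν - νh) - (a * (1 - c)) • νh‖
        ≤ ‖(b - a) • (ν - νh)‖ + ‖(a * (1 - c)) • νh‖ := norm_sub_le _ _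
      _ = |b - a| * ‖ν - νh‖ + |a * (1 - c)| * ‖νh‖ := by
          rw [norm_smul, norm_smul, Real.norm_eq_abs, Real.norm_eq_abs]
      _ = |b - a| * ‖ν - νh‖ + |a| * (1 - c) := by
          rw [hνh, abs_mul, abs_of_nonneg hc1]; ring
  have hba : |b - a| ≤ ‖ν - νh‖ * ‖g‖ := by
    have : b - a = ⟪νh - ν, g⟫ := by rw [inner_sub_left]
    rw [this]
    calc |⟪νh - ν, g⟫| ≤ ‖νh - ν‖ * ‖g‖ := abs_real_inner_le_norm _ _
      _ = ‖ν - νh‖ * ‖g‖ := by rw [norm_sub_rev]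
  have hA : |a| ≤ ‖g‖ := by
    calc |a| ≤ ‖ν‖ * ‖g‖ := abs_real_inner_le_norm _ _
      _ = ‖g‖ := by rw [hν, one_mul]
  have hdnn : (0:ℝ) ≤ ‖ν - νh‖ := norm_nonneg _
  nlinarith [abs_nonneg (b - a), abs_nonneg a, norm_nonneg g]
end

section
/- Let p : ℝ → ℝ be a polynomial of degree at most 3 with p(0) = p(1) = 0. Then sup_{x ∈ [0,1]} |p(x)| ≤ (4/27)(|p'(0)| + |p'(1)|), and consequently the L² norm of p on [0,1] satisfies ‖p‖_{L²(0,1)} ≤ (4/27)(|p'(0)| + |p'(1)|). -/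
open Polynomial

theorem stmt_11 (p : Polynomial ℝ) (hdeg : p.degree ≤ 3)
    (h0 : p.eval 0 = 0) (h1 : p.eval 1 = 0) :
    (∀ x ∈ Set.Icc (0:ℝ) 1, |p.eval x|
        ≤ (4 / 27) * (|(Polynomial.derivative p).eval 0| + |(Polynomial.derivative p).eval 1|)) ∧
    Real.sqrt (∫ x in (0:ℝ)..1, (p.eval x) ^ 2)
        ≤ (4 / 27) * (|(Polynomial.derivative p).eval 0| + |(Polynomial.derivative p).eval 1|) := by
  have hnd : p.natDegree < 4 := by
    have h3 : p.natDegree ≤ 3 := Polynomial.natDegree_le_iff_degree_le.mpr (by exact_mod_cast hdeg)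
    omega
  have heval : ∀ x : ℝ, p.eval x = ∑ i ∈ Finset.range 4, p.coeff i * x ^ i := fun x =>
    Polynomial.eval_eq_sum_range' hnd x
  set c0 := p.coeff 0
  set c1 := p.coeff 1
  set c2 := p.coeff 2
  set c3 := p.coeff 3
  have hc0 : c0 = 0 := (Polynomial.coeff_zero_eq_eval_zero p).trans h0
  have hsum : c0 + c1 + c2 + c3 = 0 := by
    have := heval 1; rw [this] at h1; simpa [Finset.sum_range_succ] using h1
  have hdnd : (Polynomial.derivative p).natDegree < 4 := by
    have := Polynomial.natDegree_derivative_le p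
    omega
  have hc4 : p.coeff 4 = 0 := Polynomial.coeff_eq_zero_of_natDegree_lt hnd
  have hd0 : (Polynomial.derivative p).eval 0 = c1 := by
    have := Polynomial.eval_eq_sum_range' hdnd (0:ℝ)
    simp only [Polynomial.coeff_derivative, Finset.sum_range_succ] at this
    simpa using this
  have hd1 : (Polynomial.derivative p).eval 1 = c1 + 2 * c2 + 3 * c3 := by
    have := Polynomial.eval_eq_sum_range' hdnd (1:ℝ)
    simp only [Polynomial.coeff_derivative, Finset.sum_range_succ] at this
    rw [this]
    push_cast
    simp [hc4]
    ring
  set A := (Polynomial.derivative p).eval 0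
  set B := (Polynomial.derivative p).eval 1
  have hident : ∀ x : ℝ, p.eval x = A * (x * (1 - x) ^ 2) - B * (x ^ 2 * (1 - x)) := by
    intro x
    rw [heval x, hd0, hd1]
    simp only [Finset.sum_range_succ, Finset.sum_range_zero]
    linear_combination (1 - 3*x^2 + 2*x^3) * hc0 + (3*x^2 - 2*x^3) * hsum
  have key : ∀ x ∈ Set.Icc (0:ℝ) 1, |p.eval x| ≤ (4 / 27) * (|A| + |B|) := by
    intro x hx
    obtain ⟨hx0, hx1⟩ := hx
    rw [hident x]
    have b1 : x * (1 - x) ^ 2 ≤ 4 / 27 := by nlinarith [sq_nonneg (3 * x - 1)]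
    have b1' : 0 ≤ x * (1 - x) ^ 2 := by nlinarith
    have b2 : x ^ 2 * (1 - x) ≤ 4 / 27 := by nlinarith [sq_nonneg (3 * x - 2)]
    have b2' : 0 ≤ x ^ 2 * (1 - x) := by nlinarith
    calc |A * (x * (1 - x) ^ 2) - B * (x ^ 2 * (1 - x))|
        ≤ |A * (x * (1 - x) ^ 2)| + |B * (x ^ 2 * (1 - x))| := abs_sub _ _
      _ = |A| * (x * (1 - x) ^ 2) + |B| * (x ^ 2 * (1 - x)) := by
          rw [abs_mul A, abs_mul B, abs_of_nonneg b1', abs_of_nonneg b2']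
      _ ≤ |A| * (4 / 27) + |B| * (4 / 27) := by
          gcongr <;> first | exact b1 | exact b2 | positivity
      _ = (4 / 27) * (|A| + |B|) := by ring
  refine ⟨key, ?_⟩
  set M := (4 / 27) * (|A| + |B|) with hM
  have hM0 : 0 ≤ M := by positivity
  have hint : (∫ x in (0:ℝ)..1, (p.eval x) ^ 2) ≤ M ^ 2 := by
    have : (∫ x in (0:ℝ)..1, (p.eval x) ^ 2) ≤ ∫ _ in (0:ℝ)..1, M ^ 2 := by
      apply intervalIntegral.integral_mono_on (by norm_num)
      · exact (Polynomial.continuous p).pow 2 |>.intervalIntegrable 0 1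
      · exact intervalIntegrable_const
      · intro x hx
        have h := key x hx
        nlinarith [abs_nonneg (p.eval x), sq_abs (p.eval x)]
    simpa using this
  calc Real.sqrt (∫ x in (0:ℝ)..1, (p.eval x) ^ 2) ≤ Real.sqrt (M ^ 2) :=
        Real.sqrt_le_sqrt hint
    _ = M := by rw [Real.sqrt_sq hM0]
end

section
/- Let h > 0 and let p : ℝ → ℝ be a polynomial of degree at most 3 with p(0) = p(h) = 0. Then ‖p‖_{L²(0,h)} ≤ h^{3/2} (|p'(0)| + |p'(h)|). -/
lemma aux12 (h x c1 c2 c3 : ℝ) (hh : 0 < h) (hx0 : 0 ≤ x) (hxh : x ≤ h)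
    (hroot : c1*h + c2*h^2 + c3*h^3 = 0) :
    |c1*x + c2*x^2 + c3*x^3| ≤ h * (|c1| + |c1 + 2*c2*h + 3*c3*h^2|) := by
  set d0 := c1 with hd0
  set dh := c1 + 2*c2*h + 3*c3*h^2 with hdh
  have key : h^3*(c1*x+c2*x^2+c3*x^3) = h*(d0*x*(h-x)^2 - dh*(x^2*(h-x))) := by
    rw [hd0, hdh]; linear_combination (3*h*x^2 - 2*x^3) * hroot
  have hA0 : 0 ≤ x*(h-x)^2 := mul_nonneg hx0 (sq_nonneg _)
  have hAh : x*(h-x)^2 ≤ h^3 := by nlinarith [sq_nonneg (h-x), sq_nonneg x]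
  have hB0 : 0 ≤ x^2*(h-x) := mul_nonneg (sq_nonneg _) (by linarith)
  have hBh : x^2*(h-x) ≤ h^3 := by nlinarith [sq_nonneg x]
  have habs : |d0*x*(h-x)^2 - dh*(x^2*(h-x))| ≤ (|d0|)*h^3 + (|dh|)*h^3 := by
    calc |d0*x*(h-x)^2 - dh*(x^2*(h-x))| ≤ |d0*x*(h-x)^2| + |dh*(x^2*(h-x))| := by
          exact abs_sub _ _
      _ = (|d0|)*(x*(h-x)^2) + (|dh|)*(x^2*(h-x)) := by
          rw [mul_assoc, abs_mul d0 (x*(h-x)^2), abs_mul dh (x^2*(h-x)), abs_of_nonneg hA0, abs_of_nonneg hB0]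
      _ ≤ (|d0|)*h^3 + (|dh|)*h^3 := by
          gcongr
  have h3pos : 0 < h^3 := by positivity
  have hmain : h^3 * |c1*x + c2*x^2 + c3*x^3| ≤ h^3 * (h * (|d0| + |dh|)) := by
    calc h^3 * |c1*x + c2*x^2 + c3*x^3| = |h^3*(c1*x+c2*x^2+c3*x^3)| := by
          rw [abs_mul, abs_of_nonneg h3pos.le]
      _ = h * |d0*x*(h-x)^2 - dh*(x^2*(h-x))| := by
          rw [key, abs_mul, abs_of_nonneg hh.le]
      _ ≤ h * ((|d0|)*h^3 + (|dh|)*h^3) := mul_le_mul_of_nonneg_left habs hh.le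
      _ = h^3 * (h * (|d0| + |dh|)) := by ring
  exact le_of_mul_le_mul_left hmain h3pos

theorem stmt_12 (h : ℝ) (hh : 0 < h) (p : Polynomial ℝ) (hdeg : p.degree ≤ 3)
    (h0 : p.eval 0 = 0) (h1 : p.eval h = 0) :
    Real.sqrt (∫ x in (0:ℝ)..h, (p.eval x) ^ 2)
      ≤ h ^ ((3:ℝ)/2) * (|(Polynomial.derivative p).eval 0| + |(Polynomial.derivative p).eval h|) := by
  have hnd : p.natDegree ≤ 3 := Polynomial.natDegree_le_iff_degree_le.2 hdeg
  have hc0 : p.coeff 0 = 0 := by rw [Polynomial.coeff_zero_eq_eval_zero, h0]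
  set c1 := p.coeff 1 with hc1
  set c2 := p.coeff 2 with hc2
  set c3 := p.coeff 3 with hc3
  have heval : ∀ x : ℝ, p.eval x = c1 * x + c2 * x^2 + c3 * x^3 := by
    intro x
    rw [Polynomial.eval_eq_sum_range' (lt_of_le_of_lt hnd (by norm_num : (3:ℕ) < 4))]
    simp only [Finset.sum_range_succ, Finset.sum_range_zero, hc0]
    ring
  have hder : ∀ x : ℝ, (Polynomial.derivative p).eval x = c1 + 2 * c2 * x + 3 * c3 * x^2 := by
    intro x
    have hnd' : (Polynomial.derivative p).natDegree < 3 :=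
      lt_of_le_of_lt (Polynomial.natDegree_derivative_le p) (by omega)
    rw [Polynomial.eval_eq_sum_range' hnd']
    simp only [Finset.sum_range_succ, Finset.sum_range_zero, Polynomial.coeff_derivative]
    push_cast
    ring
  have hroot : c1*h + c2*h^2 + c3*h^3 = 0 := by
    have := heval h; rw [h1] at this; linarith
  set M := |(Polynomial.derivative p).eval 0| + |(Polynomial.derivative p).eval h| with hM
  have hMval : M = |c1| + |c1 + 2*c2*h + 3*c3*h^2| := by
    rw [hM, hder 0, hder h]; ring_nf
  have hM0 : 0 ≤ M := by rw [hM]; positivity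
  -- pointwise bound
  have hpt : ∀ x ∈ Set.Icc (0:ℝ) h, (p.eval x)^2 ≤ (h * M)^2 := by
    intro x hx
    have hb : |p.eval x| ≤ h * M := by
      rw [heval x, hMval]
      exact aux12 h x c1 c2 c3 hh hx.1 hx.2 hroot
    have := abs_nonneg (p.eval x)
    calc (p.eval x)^2 = |p.eval x|^2 := (sq_abs _).symm
      _ ≤ (h*M)^2 := pow_le_pow_left₀ this hb 2
  -- integral bound
  have hcont : Continuous fun x : ℝ => (p.eval x)^2 := (Polynomial.continuous p).pow 2
  have hint : IntervalIntegrable (fun x : ℝ => (p.eval x)^2) MeasureTheory.volume 0 h :=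
    hcont.intervalIntegrable 0 h
  have hIle : (∫ x in (0:ℝ)..h, (p.eval x)^2) ≤ h * (h*M)^2 := by
    calc (∫ x in (0:ℝ)..h, (p.eval x)^2)
        ≤ ∫ _x in (0:ℝ)..h, (h*M)^2 :=
          intervalIntegral.integral_mono_on hh.le hint (intervalIntegrable_const) hpt
      _ = h * (h*M)^2 := by rw [intervalIntegral.integral_const]; simp
  have hRHS : (h ^ ((3:ℝ)/2) * M)^2 = h * (h*M)^2 := by
    have h32 : (h ^ ((3:ℝ)/2))^2 = h^(3:ℕ) := by
      rw [← Real.rpow_natCast (h ^ ((3:ℝ)/2)) 2, ← Real.rpow_mul hh.le,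
        ← Real.rpow_natCast h 3]
      norm_num
    rw [mul_pow, h32]
    ring
  calc Real.sqrt (∫ x in (0:ℝ)..h, (p.eval x)^2)
      ≤ Real.sqrt ((h ^ ((3:ℝ)/2) * M)^2) := by
        apply Real.sqrt_le_sqrt; rw [hRHS]; exact hIle
    _ = h ^ ((3:ℝ)/2) * M := Real.sqrt_sq (by positivity)
end

section
/- Let ν, ν_h ∈ ℝ³ be unit vectors with ⟨ν, ν_h⟩ > 1/2. Then for every g ∈ ℝ³ with ⟨ν, g⟩ = 0: ‖(I − ν_h⊗ν_h)(I − ν⊗ν) g − (I − (ν⊗ν_h)/⟨ν,ν_h⟩) g‖ ≤ (5/2)‖ν − ν_h‖² ‖g‖. -/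
open scoped RealInnerProductSpace

/-- `(I − ν_h⊗ν_h)(I − ν⊗ν) g − (I − (ν⊗ν_h)/⟨ν,ν_h⟩) g` written out in vector form. -/
theorem stmt_17 (ν νh : EuclideanSpace ℝ (Fin 3)) (hν : ‖ν‖ = 1) (hνh : ‖νh‖ = 1)
    (hpos : (1:ℝ)/2 < ⟪ν, νh⟫)
    (g : EuclideanSpace ℝ (Fin 3)) (hg : ⟪ν, g⟫ = 0) :
    ‖((g - ⟪ν, g⟫ • ν) - ⟪νh, g - ⟪ν, g⟫ • ν⟫ • νh) - (g - (⟪νh, g⟫ / ⟪ν, νh⟫) • ν)‖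
      ≤ (5 / 2) * ‖ν - νh‖ ^ 2 * ‖g‖ := by
  set c : ℝ := ⟪ν, νh⟫ with hc
  set t : ℝ := ⟪νh, g⟫ with ht
  have hc0 : c ≠ 0 := by positivity
  have hc1 : c ≤ 1 := by
    calc c ≤ ‖ν‖ * ‖νh‖ := real_inner_le_norm ν νh
    _ = 1 := by rw [hν, hνh]; ring
  -- simplify the vector
  have hvec : ((g - ⟪ν, g⟫ • ν) - ⟪νh, g - ⟪ν, g⟫ • ν⟫ • νh) - (g - (t / c) • ν)
      = t • (c⁻¹ • ν - νh) := by
    rw [hg]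
    simp only [zero_smul, sub_zero]
    rw [smul_sub, smul_smul, div_eq_mul_inv, mul_comm]
    abel
  rw [hvec, norm_smul]
  -- bound |t|
  have htg : t = ⟪νh - ν, g⟫ := by rw [inner_sub_left, hg]; ring
  have habs : ‖t‖ ≤ ‖ν - νh‖ * ‖g‖ := by
    rw [htg]
    calc ‖⟪νh - ν, g⟫‖ ≤ ‖νh - ν‖ * ‖g‖ := norm_inner_le_norm _ _
    _ = ‖ν - νh‖ * ‖g‖ := by rw [norm_sub_rev]
  -- compute norms squared
  have hw : ‖c⁻¹ • ν - νh‖ ^ 2 = c⁻¹ ^ 2 - 1 := by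
    rw [norm_sub_sq_real, norm_smul, real_inner_smul_left]
    rw [hν, hνh, ← hc]
    simp [abs_of_pos (show (0:ℝ) < c⁻¹ by positivity)]
    field_simp
    ring
  have hd : ‖ν - νh‖ ^ 2 = 2 - 2 * c := by
    rw [norm_sub_sq_real, hν, hνh, ← hc]; ring
  have hwnn : (0:ℝ) ≤ ‖c⁻¹ • ν - νh‖ := norm_nonneg _
  have hdnn : (0:ℝ) ≤ ‖ν - νh‖ := norm_nonneg _
  have hgnn : (0:ℝ) ≤ ‖g‖ := norm_nonneg _
  have htnn : (0:ℝ) ≤ ‖t‖ := norm_nonneg _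
  -- ‖w‖ ≤ (5/2) ‖ν - νh‖
  have hkey : ‖c⁻¹ • ν - νh‖ ≤ (5/2) * ‖ν - νh‖ := by
    have hsq : ‖c⁻¹ • ν - νh‖ ^ 2 ≤ ((5/2) * ‖ν - νh‖) ^ 2 := by
      rw [hw, mul_pow, hd]
      have h2 : (1:ℝ)/2 < c := hpos
      have : c⁻¹ ^ 2 - 1 = (1 - c) * (1 + c) / c ^ 2 := by field_simp; ring
      rw [this]
      rw [div_le_iff₀ (by positivity)]
      nlinarith [mul_nonneg (sub_nonneg.2 hc1) (sq_nonneg (2*c - 1)), sub_nonneg.2 hc1, sq_nonneg c]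
    nlinarith
  calc ‖t‖ * ‖c⁻¹ • ν - νh‖ ≤ (‖ν - νh‖ * ‖g‖) * ((5/2) * ‖ν - νh‖) := by
        apply mul_le_mul habs hkey hwnn (by positivity)
  _ = (5/2) * ‖ν - νh‖ ^ 2 * ‖g‖ := by ring
end
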